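/- For m ≥ 1 define β_m = F₀(β_{m−1}) ∪ F₁(β_{m−1}) ∪ F₂(β_{m−1}) ⊆ V_{m+2}, with conductances c^{β_m} computed at level m+2. Then for distinct x, y ∈ β_m: (i) if there is no word w of length m with {x, y} ⊆ F_w(β₀), then c^{β_m}_{x,y} = 0; (ii) if x = F_w(x̃) and y = F_w(ỹ) for some word w of length m and distinct x̃, ỹ ∈ β₀, then c^{β_m}_{x,y} = (5/3)^m · c^{β₀}_{x̃,ỹ}, where c^{β₀} denotes the conductances of β₀ computed at level 2. -/

import Mathlib

open scoped BigOperators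

noncomputable section

namespace SGPaper

/-- The three corners of the Sierpinski gasket:
`q₀ = (1/2, √3/2)`, `q₁ = (0,0)`, `q₂ = (1,0)`. -/
def q : Fin 3 → ℝ × ℝ
  | 0 => (1 / 2, Real.sqrt 3 / 2)
  | 1 => (0, 0)
  | 2 => (1, 0)

/-- The contraction map towards corner `i`: `F_i(x) = (x + q_i)/2`. -/
def Fmap (i : Fin 3) (x : ℝ × ℝ) : ℝ × ℝ := (2⁻¹ : ℝ) • (x + q i)

/-- `Fword w = F_{w₁} ∘ ⋯ ∘ F_{w_m}` for the word `w = w₁⋯w_m`. -/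
def Fword (w : List (Fin 3)) : ℝ × ℝ → ℝ × ℝ :=
  w.foldr (fun i f => Fmap i ∘ f) id

/-- The level-`m` vertex set of the Sierpinski gasket:
`V_m = ⋃_{|w| = m} F_w({q₀, q₁, q₂})`. -/
def V (m : ℕ) : Set (ℝ × ℝ) :=
  {x | ∃ w : List (Fin 3), w.length = m ∧ ∃ i : Fin 3, x = Fword w (q i)}

/-- `x` and `y` are `m`-neighbors: they are distinct and belong to a common
level-`m` cell `F_w({q₀, q₁, q₂})`. -/
def Nbr (m : ℕ) (x y : ℝ × ℝ) : Prop :=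
  x ≠ y ∧ ∃ w : List (Fin 3), w.length = m ∧
    (∃ i : Fin 3, x = Fword w (q i)) ∧ (∃ j : Fin 3, y = Fword w (q j))

/-- The value `(u x - u y)²` on the unordered pair `{x, y}`. -/
def edgeVal (u : ℝ × ℝ → ℝ) : Sym2 (ℝ × ℝ) → ℝ :=
  Sym2.lift ⟨fun x y => (u x - u y) ^ 2, fun _ _ => by ring⟩

/-- The unordered pair `e` is an edge of the level-`m` graph `Γ_m`. -/
def IsEdge (m : ℕ) (e : Sym2 (ℝ × ℝ)) : Prop :=
  ∃ x y : ℝ × ℝ, Nbr m x y ∧ e = s(x, y)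

/-- The level-`m` graph energy: `E_m(u) = (5/3)^m Σ (u x − u y)²`, the sum being over
unordered `m`-neighbor pairs `{x, y}` (a finite set, so `tsum` is the honest sum). -/
def Energy (m : ℕ) (u : ℝ × ℝ → ℝ) : ℝ :=
  (5 / 3 : ℝ) ^ m * ∑' e : {e : Sym2 (ℝ × ℝ) // IsEdge m e}, edgeVal u e

/-- `Q_E(v)`: minimal level-`m` energy among functions `u : V_m → ℝ` agreeing
with `v` on `E` (the minimum is attained, so it equals this infimum). -/
def Q (m : ℕ) (E : Set (ℝ × ℝ)) (v : ℝ × ℝ → ℝ) : ℝ :=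
  sInf {r | ∃ u : ℝ × ℝ → ℝ, (∀ x ∈ E, u x = v x) ∧ r = Energy m u}

/-- Indicator function of the point `z`. -/
def ind (z : ℝ × ℝ) : ℝ × ℝ → ℝ := fun t => if t = z then 1 else 0

/-- The conductance `c^E_{x,y} = (Q_E(𝟙_x) + Q_E(𝟙_y) − Q_E(𝟙_x + 𝟙_y))/2`
between `x, y ∈ E`, computed at level `m`. -/
def cond (m : ℕ) (E : Set (ℝ × ℝ)) (x y : ℝ × ℝ) : ℝ :=
  (Q m E (ind x) + Q m E (ind y) - Q m E (ind x + ind y)) / 2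

/-- The points `p₀ = F₀F₂(q₁)`, `p₁ = F₁F₀(q₂)`, `p₂ = F₂F₁(q₀)`. -/
def p (i : Fin 3) : ℝ × ℝ := Fmap i (Fmap (i + 2) (q (i + 1)))

/-- The six-point set `β₀ = {q₀, q₁, q₂, p₀, p₁, p₂} ⊆ V₂`. -/
def beta0 : Set (ℝ × ℝ) := {q 0, q 1, q 2, p 0, p 1, p 2}

/-- `β_m = F₀(β_{m−1}) ∪ F₁(β_{m−1}) ∪ F₂(β_{m−1})`. -/
def betaSet : ℕ → Set (ℝ × ℝ)
  | 0 => beta0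
  | m + 1 => ⋃ i : Fin 3, Fmap i '' betaSet m


/-! The maps `F_i` send the triangle `T = conv{q₀, q₁, q₂}` onto three cells `F_i(T)`, any two
of which meet only in the single point `F_i(q_j) = F_j(q_i)`. Hence each edge of level `n + 1`
lies in exactly one cell, so `E_{n+1}(u) = (5/3) Σ_i E_n(u ∘ F_i)`. If `E ⊆ T` contains the
corners, functions prescribed cellwise on `⋃ F_i(E)` agree at the junction points and glue, so
`Q_{⋃ F_i(E)}(v) = (5/3) Σ_i Q_E(v ∘ F_i)`. As `c` is a combination of three values of `Q`,
`c^{β_{n+1}}_{x,y} = (5/3) Σ_i c^{β_n}_{F_i⁻¹x, F_i⁻¹y}`. A conductance vanishes as soon as one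
of its points lies outside the set, and two distinct points cannot both be the junction point,
so induction on the length of the word gives both parts. -/

/-- Barycentric coordinates with respect to the corners `q 0, q 1, q 2`. -/
def bary : Fin 3 → ℝ × ℝ → ℝ
  | 0 => fun z => 2 * z.2 / Real.sqrt 3
  | 1 => fun z => 1 - z.1 - z.2 / Real.sqrt 3
  | 2 => fun z => z.1 - z.2 / Real.sqrt 3

def triangle : Set (ℝ × ℝ) := {z | ∀ i, 0 ≤ bary i z}

lemma bary_q (i j : Fin 3) : bary i (q j) = if i = j then 1 else 0 := by
  fin_cases i <;> fin_cases j <;> simp [bary, q] <;> field_simp <;> norm_num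

lemma bary_Fmap (i j : Fin 3) (z : ℝ × ℝ) :
    bary i (Fmap j z) = (bary i z + if i = j then 1 else 0) / 2 := by
  rw [← bary_q]
  fin_cases i <;> simp [bary, Fmap] <;> ring

lemma bary_sum (z : ℝ × ℝ) : bary 0 z + bary 1 z + bary 2 z = 1 := by
  simp only [bary]; ring

lemma bary_injective {z z' : ℝ × ℝ} (h : ∀ i, bary i z = bary i z') : z = z' := by
  have h3 : Real.sqrt 3 ≠ 0 := by positivity
  have h0 := h 0
  have h2 := h 2
  simp only [bary] at h0 h2
  have hy : z.2 = z'.2 := by field_simp at h0; linarith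
  refine Prod.ext ?_ hy
  rw [hy] at h2; linarith

lemma Fmap_mem_triangle (i : Fin 3) {z : ℝ × ℝ} (hz : z ∈ triangle) : Fmap i z ∈ triangle := by
  intro j
  rw [bary_Fmap]
  have := hz j
  split_ifs <;> linarith

lemma q_mem_triangle (i : Fin 3) : q i ∈ triangle := by
  intro j
  rw [bary_q]
  split_ifs <;> norm_num

lemma Fword_mem_triangle (w : List (Fin 3)) {z : ℝ × ℝ} (hz : z ∈ triangle) :
    Fword w z ∈ triangle := by
  induction w with
  | nil => exact hz
  | cons i w ih => exact Fmap_mem_triangle i ih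

lemma V_subset_triangle (m : ℕ) : V m ⊆ triangle := by
  rintro _ ⟨w, -, i, rfl⟩
  exact Fword_mem_triangle w (q_mem_triangle i)

lemma eq_Fmap_q_of_half_le_bary {i j : Fin 3} (hij : i ≠ j) {z : ℝ × ℝ} (hz : z ∈ triangle)
    (hi : 1 / 2 ≤ bary i z) (hj : 1 / 2 ≤ bary j z) : z = Fmap i (q j) := by
  refine bary_injective fun k => ?_
  have := hz 0
  have := hz 1
  have := hz 2
  have := bary_sum z
  rw [bary_Fmap, bary_q]
  fin_cases i <;> fin_cases j <;> fin_cases k <;> simp at hij hi hj ⊢ <;> linarith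

lemma Fmap_injective (i : Fin 3) : Function.Injective (Fmap i) := fun a b h =>
  add_right_cancel (smul_right_injective (ℝ × ℝ) (by norm_num : (2⁻¹ : ℝ) ≠ 0) h)

lemma Fmap_q_comm (i j : Fin 3) : Fmap i (q j) = Fmap j (q i) := by
  rw [Fmap, Fmap, add_comm]

lemma Fmap_eq_Fmap {i j : Fin 3} (hij : i ≠ j) {a b : ℝ × ℝ} (ha : a ∈ triangle)
    (hb : b ∈ triangle) (h : Fmap i a = Fmap j b) : a = q j ∧ b = q i := by
  have hi : 1 / 2 ≤ bary i (Fmap i a) := by rw [bary_Fmap, if_pos rfl]; linarith [ha i]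
  have hj : 1 / 2 ≤ bary j (Fmap i a) := by rw [h, bary_Fmap, if_pos rfl]; linarith [hb j]
  have hmid := eq_Fmap_q_of_half_le_bary hij (Fmap_mem_triangle i ha) hi hj
  refine ⟨Fmap_injective i hmid, Fmap_injective j ?_⟩
  rw [← h, hmid, Fmap_q_comm]

def Finv (i : Fin 3) (z : ℝ × ℝ) : ℝ × ℝ := (2 : ℝ) • z - q i

lemma Finv_Fmap (i : Fin 3) (z : ℝ × ℝ) : Finv i (Fmap i z) = z := by
  rw [Finv, Fmap, smul_smul]; norm_num

lemma Fmap_Finv (i : Fin 3) (z : ℝ × ℝ) : Fmap i (Finv i z) = z := by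
  rw [Finv, Fmap, sub_add_cancel, smul_smul]; norm_num

lemma Fmap_q_self (i : Fin 3) : Fmap i (q i) = q i := by
  rw [Fmap, ← two_smul ℝ, smul_smul]; norm_num

lemma Fword_cons (i : Fin 3) (w : List (Fin 3)) (z : ℝ × ℝ) :
    Fword (i :: w) z = Fmap i (Fword w z) := rfl

lemma Fword_injective (w : List (Fin 3)) : Function.Injective (Fword w) := by
  induction w with
  | nil => exact Function.injective_id
  | cons i w ih => exact (Fmap_injective i).comp ih

lemma edgeVal_nonneg (u : ℝ × ℝ → ℝ) (e : Sym2 (ℝ × ℝ)) : 0 ≤ edgeVal u e := by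
  induction e using Sym2.ind with
  | _ x y => exact sq_nonneg _

lemma edgeVal_comp_Fmap (u : ℝ × ℝ → ℝ) (i : Fin 3) (e : Sym2 (ℝ × ℝ)) :
    edgeVal (u ∘ Fmap i) e = edgeVal u (e.map (Fmap i)) := by
  induction e using Sym2.ind with
  | _ x y => rfl

lemma IsEdge.exists_mem_V {m : ℕ} {e : Sym2 (ℝ × ℝ)} (he : IsEdge m e) :
    ∃ x y, x ∈ V m ∧ y ∈ V m ∧ x ≠ y ∧ e = s(x, y) := by
  obtain ⟨x, y, ⟨hxy, w, hw, ⟨i, rfl⟩, ⟨j, rfl⟩⟩, rfl⟩ := he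
  exact ⟨_, _, ⟨w, hw, i, rfl⟩, ⟨w, hw, j, rfl⟩, hxy, rfl⟩

lemma finite_isEdge (m : ℕ) : Finite {e : Sym2 (ℝ × ℝ) // IsEdge m e} := by
  refine Set.Finite.to_subtype (Set.Finite.subset (Set.finite_range
    fun p : List.Vector (Fin 3) m × Fin 3 × Fin 3 =>
      s(Fword p.1.1 (q p.2.1), Fword p.1.1 (q p.2.2))) ?_)
  rintro e ⟨x, y, ⟨-, w, hw, ⟨i, rfl⟩, ⟨j, rfl⟩⟩, rfl⟩
  exact ⟨(⟨w, hw⟩, i, j), rfl⟩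

lemma IsEdge.map_Fmap {n : ℕ} {e : Sym2 (ℝ × ℝ)} (he : IsEdge n e) (i : Fin 3) :
    IsEdge (n + 1) (e.map (Fmap i)) := by
  obtain ⟨x, y, ⟨hxy, w, hw, ⟨a, rfl⟩, ⟨b, rfl⟩⟩, rfl⟩ := he
  exact ⟨_, _, ⟨(Fmap_injective i).ne hxy, i :: w, by simp [hw], ⟨a, rfl⟩, ⟨b, rfl⟩⟩,
    Sym2.map_mk _ _ _⟩

lemma IsEdge.exists_map_Fmap {n : ℕ} {e : Sym2 (ℝ × ℝ)} (he : IsEdge (n + 1) e) :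
    ∃ i e', IsEdge n e' ∧ e'.map (Fmap i) = e := by
  obtain ⟨x, y, ⟨hxy, _ | ⟨i, w⟩, hw, ⟨a, rfl⟩, ⟨b, rfl⟩⟩, rfl⟩ := he
  · simp at hw
  refine ⟨i, s(Fword w (q a), Fword w (q b)), ⟨_, _, ⟨fun h => hxy ?_, w, by simpa using hw,
    ⟨a, rfl⟩, ⟨b, rfl⟩⟩, rfl⟩, Sym2.map_mk _ _ _⟩
  rw [Fword_cons, Fword_cons, h]

lemma IsEdge.map_Fmap_injective {n : ℕ} {i j : Fin 3} {e e' : Sym2 (ℝ × ℝ)} (he : IsEdge n e)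
    (he' : IsEdge n e') (h : e.map (Fmap i) = e'.map (Fmap j)) : i = j ∧ e = e' := by
  by_cases hij : i = j
  · subst hij
    exact ⟨rfl, Sym2.map.injective (Fmap_injective i) h⟩
  obtain ⟨x, y, hx, hy, hxy, rfl⟩ := he.exists_mem_V
  obtain ⟨x', y', hx', hy', -, rfl⟩ := he'.exists_mem_V
  have corner : ∀ a ∈ V n, ∀ b ∈ V n, Fmap i a = Fmap j b → a = q j := fun a ha b hb hab =>
    (Fmap_eq_Fmap hij (V_subset_triangle n ha) (V_subset_triangle n hb) hab).1
  simp only [Sym2.map_mk, Sym2.eq_iff] at h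
  refine (hxy ?_).elim
  rcases h with ⟨h1, h2⟩ | ⟨h1, h2⟩
  · rw [corner x hx x' hx' h1, corner y hy y' hy' h2]
  · rw [corner x hx y' hy' h1, corner y hy x' hx' h2]

lemma energy_nonneg (m : ℕ) (u : ℝ × ℝ → ℝ) : 0 ≤ Energy m u :=
  mul_nonneg (by positivity) (tsum_nonneg fun e => edgeVal_nonneg u e)

lemma energy_zero (m : ℕ) : Energy m 0 = 0 := by
  have h : ∀ e, edgeVal 0 e = 0 := fun e => by
    induction e using Sym2.ind with
    | _ x y => simp [edgeVal]
  simp [Energy, h]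

lemma energy_congr {m : ℕ} {u u' : ℝ × ℝ → ℝ} (h : Set.EqOn u u' (V m)) :
    Energy m u = Energy m u' := by
  unfold Energy
  congr 1
  refine tsum_congr fun ⟨e, he⟩ => ?_
  obtain ⟨x, y, hx, hy, -, rfl⟩ := he.exists_mem_V
  simp only [edgeVal, Sym2.lift_mk, h hx, h hy]

lemma energy_succ (n : ℕ) (u : ℝ × ℝ → ℝ) :
    Energy (n + 1) u = 5 / 3 * ∑ i : Fin 3, Energy n (u ∘ Fmap i) := by
  classical
  have := @Fintype.ofFinite _ (finite_isEdge n)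
  have := @Fintype.ofFinite _ (finite_isEdge (n + 1))
  let Φ : Fin 3 × {e // IsEdge n e} → {e // IsEdge (n + 1) e} :=
    fun p => ⟨p.2.1.map (Fmap p.1), p.2.2.map_Fmap p.1⟩
  have hΦ : Function.Bijective Φ := by
    refine ⟨fun ⟨i, e⟩ ⟨j, e'⟩ h => ?_, fun ⟨e, he⟩ => ?_⟩
    · obtain ⟨rfl, he⟩ := e.2.map_Fmap_injective e'.2 (congrArg Subtype.val h)
      rw [Subtype.ext he]
    · obtain ⟨i, e', he', rfl⟩ := he.exists_map_Fmap
      exact ⟨(i, ⟨e', he'⟩), rfl⟩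
  have hsum : ∑ e : {e // IsEdge (n + 1) e}, edgeVal u e
      = ∑ p : Fin 3 × {e // IsEdge n e}, edgeVal (u ∘ Fmap p.1) p.2 :=
    (Fintype.sum_bijective Φ hΦ _ _ fun p => edgeVal_comp_Fmap u p.1 p.2).symm
  simp only [Energy, tsum_fintype, hsum, Fintype.sum_prod_type, Finset.mul_sum]
  refine Finset.sum_congr rfl fun i _ => Finset.sum_congr rfl fun e _ => ?_
  ring

section Q

variable {m : ℕ} {E : Set (ℝ × ℝ)} {v : ℝ × ℝ → ℝ}

lemma Q_le_energy {u : ℝ × ℝ → ℝ} (hu : ∀ x ∈ E, u x = v x) : Q m E v ≤ Energy m u :=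
  csInf_le ⟨0, by rintro r ⟨u, -, rfl⟩; exact energy_nonneg m u⟩ ⟨u, hu, rfl⟩

lemma le_Q {r : ℝ} (h : ∀ u : ℝ × ℝ → ℝ, (∀ x ∈ E, u x = v x) → r ≤ Energy m u) :
    r ≤ Q m E v :=
  le_csInf ⟨_, v, fun _ _ => rfl, rfl⟩ (by rintro _ ⟨u, hu, rfl⟩; exact h u hu)

lemma exists_energy_lt_Q_add {ε : ℝ} (hε : 0 < ε) :
    ∃ u : ℝ × ℝ → ℝ, (∀ x ∈ E, u x = v x) ∧ Energy m u < Q m E v + ε := by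
  have hne : {r | ∃ u, (∀ x ∈ E, u x = v x) ∧ r = Energy m u}.Nonempty :=
    ⟨_, v, fun _ _ => rfl, rfl⟩
  obtain ⟨_, ⟨u, hu, rfl⟩, hlt⟩ := Real.lt_sInf_add_pos hne hε
  exact ⟨u, hu, hlt⟩

lemma Q_congr {v' : ℝ × ℝ → ℝ} (h : Set.EqOn v v' E) : Q m E v = Q m E v' := by
  unfold Q
  congr 1
  ext r
  refine exists_congr fun u => and_congr_left fun _ => forall₂_congr fun _ hx => ?_
  rw [h hx]

lemma Q_eq_zero (h : Set.EqOn v 0 E) : Q m E v = 0 :=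
  le_antisymm ((Q_le_energy fun _ hx => (h hx).symm).trans_eq (energy_zero m))
    (le_Q fun u _ => energy_nonneg m u)

end Q

lemma Q_iUnion_image_Fmap (n : ℕ) {E : Set (ℝ × ℝ)} (hq : ∀ i, q i ∈ E) (hE : E ⊆ triangle)
    (v : ℝ × ℝ → ℝ) :
    Q (n + 1) (⋃ i, Fmap i '' E) v = 5 / 3 * ∑ i : Fin 3, Q n E (v ∘ Fmap i) := by
  refine le_antisymm (le_of_forall_pos_le_add fun ε hε => ?_) (le_Q fun u hu => ?_)
  · choose u hu hlt using fun i : Fin 3 => exists_energy_lt_Q_add (m := n) (E := E)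
      (v := v ∘ Fmap i) (by positivity : 0 < ε / 5)
    have hglue : (fun p : Fin 3 × triangle => u p.1 p.2).FactorsThrough
        fun p => Fmap p.1 p.2 := by
      rintro ⟨i, a, ha⟩ ⟨j, b, hb⟩ (hab : Fmap i a = Fmap j b)
      by_cases hij : i = j
      · subst hij
        obtain rfl := Fmap_injective i hab
        rfl
      obtain ⟨rfl, rfl⟩ := Fmap_eq_Fmap hij ha hb hab
      simp only [hu i _ (hq j), hu j _ (hq i), Function.comp_apply, Fmap_q_comm]
    set g := Function.extend (fun p : Fin 3 × triangle => Fmap p.1 p.2)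
      (fun p => u p.1 p.2) 0
    have hg : ∀ i, ∀ a ∈ triangle, g (Fmap i a) = u i a := fun i a ha =>
      hglue.extend_apply _ (i, ⟨a, ha⟩)
    calc Q (n + 1) (⋃ i, Fmap i '' E) v ≤ Energy (n + 1) g := Q_le_energy <| by
          simp only [Set.mem_iUnion, Set.mem_image]
          rintro _ ⟨i, a, ha, rfl⟩
          rw [hg i a (hE ha), hu i a ha, Function.comp_apply]
      _ = 5 / 3 * ∑ i, Energy n (u i) := by
          rw [energy_succ]
          congr 1
          exact Finset.sum_congr rfl fun i _ =>
            energy_congr fun z hz => hg i z (V_subset_triangle n hz)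
      _ ≤ 5 / 3 * ∑ i : Fin 3, (Q n E (v ∘ Fmap i) + ε / 5) := by
          gcongr with i
          exact (hlt i).le
      _ = 5 / 3 * ∑ i : Fin 3, Q n E (v ∘ Fmap i) + ε := by
          simp only [Finset.sum_add_distrib, Finset.sum_const, Finset.card_univ, Fintype.card_fin]
          ring
  · rw [energy_succ]
    gcongr with i
    exact Q_le_energy fun x hx => hu _ (Set.mem_iUnion.2 ⟨i, x, hx, rfl⟩)

lemma cond_comm (m : ℕ) (E : Set (ℝ × ℝ)) (a b : ℝ × ℝ) : cond m E a b = cond m E b a := by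
  rw [cond, cond, add_comm (ind a), add_comm (Q m E (ind a))]

lemma cond_eq_zero_of_notMem_left {m : ℕ} {E : Set (ℝ × ℝ)} {a : ℝ × ℝ} (ha : a ∉ E)
    (b : ℝ × ℝ) : cond m E a b = 0 := by
  have hind : Set.EqOn (ind a) 0 E := fun z hz => if_neg (ne_of_mem_of_not_mem hz ha)
  have hsum : Q m E (ind a + ind b) = Q m E (ind b) :=
    Q_congr fun z hz => by simp [hind hz]
  rw [cond, Q_eq_zero hind, hsum]
  ring

lemma cond_eq_zero_of_notMem_right {m : ℕ} {E : Set (ℝ × ℝ)} (a : ℝ × ℝ) {b : ℝ × ℝ}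
    (hb : b ∉ E) : cond m E a b = 0 := by
  rw [cond_comm, cond_eq_zero_of_notMem_left hb]

lemma ind_comp_Fmap (i : Fin 3) (x : ℝ × ℝ) : ind x ∘ Fmap i = ind (Finv i x) := by
  ext z
  simp only [ind, Function.comp_apply]
  congr 1
  exact propext ⟨fun h => by rw [← h, Finv_Fmap], fun h => by rw [h, Fmap_Finv]⟩

lemma cond_iUnion_image_Fmap (n : ℕ) {E : Set (ℝ × ℝ)} (hq : ∀ i, q i ∈ E) (hE : E ⊆ triangle)
    (x y : ℝ × ℝ) :
    cond (n + 1) (⋃ i, Fmap i '' E) x y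
      = 5 / 3 * ∑ i : Fin 3, cond n E (Finv i x) (Finv i y) := by
  simp only [cond, Q_iUnion_image_Fmap n hq hE, Pi.add_comp, ind_comp_Fmap, Finset.mul_sum,
    ← Finset.sum_add_distrib, ← Finset.sum_sub_distrib, Finset.sum_div]
  exact Finset.sum_congr rfl fun i _ => by ring

lemma beta0_subset_triangle : beta0 ⊆ triangle := by
  rintro z (rfl | rfl | rfl | rfl | rfl | rfl)
  all_goals first
    | exact q_mem_triangle _
    | exact Fmap_mem_triangle _ (Fmap_mem_triangle _ (q_mem_triangle _))

lemma q_mem_beta0 (i : Fin 3) : q i ∈ beta0 := by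
  fin_cases i <;> simp [beta0]

lemma q_mem_betaSet (n : ℕ) (i : Fin 3) : q i ∈ betaSet n := by
  induction n with
  | zero => exact q_mem_beta0 i
  | succ n ih => exact Set.mem_iUnion.2 ⟨i, q i, ih, Fmap_q_self i⟩

lemma betaSet_subset_triangle (n : ℕ) : betaSet n ⊆ triangle := by
  induction n with
  | zero => exact beta0_subset_triangle
  | succ n ih =>
    rintro _ hz
    obtain ⟨i, a, ha, rfl⟩ := Set.mem_iUnion.1 hz
    exact Fmap_mem_triangle i (ih ha)

lemma Fword_mem_betaSet (w : List (Fin 3)) {z : ℝ × ℝ} (hz : z ∈ beta0) :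
    Fword w z ∈ betaSet w.length := by
  induction w with
  | nil => exact hz
  | cons i w ih => exact Set.mem_iUnion.2 ⟨i, Fword w z, ih, rfl⟩

lemma cond_betaSet_succ (n : ℕ) (x y : ℝ × ℝ) :
    cond (n + 1 + 2) (betaSet (n + 1)) x y
      = 5 / 3 * ∑ i : Fin 3, cond (n + 2) (betaSet n) (Finv i x) (Finv i y) :=
  cond_iUnion_image_Fmap (n + 2) (q_mem_betaSet n) (betaSet_subset_triangle n) x y

theorem cond_betaSet_eq_zero (m : ℕ) {x y : ℝ × ℝ}
    (h : ¬ ∃ w : List (Fin 3), w.length = m ∧ x ∈ Fword w '' beta0 ∧ y ∈ Fword w '' beta0) :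
    cond (m + 2) (betaSet m) x y = 0 := by
  induction m generalizing x y with
  | zero =>
    by_cases hx : x ∈ beta0
    · refine cond_eq_zero_of_notMem_right x fun hy => h ⟨[], rfl, ?_, ?_⟩ <;> simpa [Fword]
    · exact cond_eq_zero_of_notMem_left hx y
  | succ n ih =>
    rw [cond_betaSet_succ]
    refine mul_eq_zero_of_right _ (Finset.sum_eq_zero fun i _ => ih ?_)
    rintro ⟨w, hw, ⟨a, ha, hax⟩, ⟨b, hb, hby⟩⟩
    refine h ⟨i :: w, by simp [hw], ⟨a, ha, ?_⟩, ⟨b, hb, ?_⟩⟩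
    · exact (congrArg (Fmap i) hax).trans (Fmap_Finv i x)
    · exact (congrArg (Fmap i) hby).trans (Fmap_Finv i y)

theorem cond_betaSet_Fword (w : List (Fin 3)) {xt yt : ℝ × ℝ} (hxt : xt ∈ beta0)
    (hyt : yt ∈ beta0) (hne : xt ≠ yt) :
    cond (w.length + 2) (betaSet w.length) (Fword w xt) (Fword w yt)
      = (5 / 3 : ℝ) ^ w.length * cond 2 beta0 xt yt := by
  induction w with
  | nil => simp [Fword, betaSet]
  | cons i w ih =>
    have hx := Fword_mem_betaSet w hxt
    have hy := Fword_mem_betaSet w hyt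
    have hne' : Fword w xt ≠ Fword w yt := (Fword_injective w).ne hne
    have hother : ∀ j ≠ i, cond (w.length + 2) (betaSet w.length)
        (Finv j (Fmap i (Fword w xt))) (Finv j (Fmap i (Fword w yt))) = 0 := by
      intro j hji
      have corner : ∀ z ∈ betaSet w.length, Finv j (Fmap i z) ∈ betaSet w.length → z = q j :=
        fun z hz hjz => (Fmap_eq_Fmap (Ne.symm hji) (betaSet_subset_triangle _ hz)
          (betaSet_subset_triangle _ hjz) (Fmap_Finv j _).symm).1
      by_cases hjx : Finv j (Fmap i (Fword w xt)) ∈ betaSet w.length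
      · by_cases hjy : Finv j (Fmap i (Fword w yt)) ∈ betaSet w.length
        · exact absurd ((corner _ hx hjx).trans (corner _ hy hjy).symm) hne'
        · exact cond_eq_zero_of_notMem_right _ hjy
      · exact cond_eq_zero_of_notMem_left hjx _
    rw [List.length_cons, cond_betaSet_succ, Fword_cons, Fword_cons,
      Finset.sum_eq_single i (fun j _ => hother j) (by simp), Finv_Fmap, Finv_Fmap, ih, pow_succ]
    ring

theorem stmt7_general (m : ℕ) (x y : ℝ × ℝ) :
    ((¬ ∃ w : List (Fin 3), w.length = m ∧ x ∈ Fword w '' beta0 ∧ y ∈ Fword w '' beta0) →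
      cond (m + 2) (betaSet m) x y = 0) ∧
    (∀ (w : List (Fin 3)) (xt yt : ℝ × ℝ), w.length = m →
      xt ∈ beta0 → yt ∈ beta0 → xt ≠ yt → x = Fword w xt → y = Fword w yt →
      cond (m + 2) (betaSet m) x y = (5 / 3 : ℝ) ^ m * cond 2 beta0 xt yt) := by
  refine ⟨cond_betaSet_eq_zero m, ?_⟩
  rintro w xt yt rfl hxt hyt hne rfl rfl
  exact cond_betaSet_Fword w hxt hyt hne

/-- For `m ≥ 1` and distinct `x, y ∈ β_m`, with conductances computed at
level `m + 2`: (i) if no word `w` of length `m` has `{x, y} ⊆ F_w(β₀)` then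
`c^{β_m}_{x,y} = 0`; (ii) if `x = F_w(x̃)`, `y = F_w(ỹ)` with `|w| = m` and distinct
`x̃, ỹ ∈ β₀`, then `c^{β_m}_{x,y} = (5/3)^m c^{β₀}_{x̃,ỹ}`. -/
theorem stmt7 (m : ℕ) (hm : 1 ≤ m) (x y : ℝ × ℝ)
    (hx : x ∈ betaSet m) (hy : y ∈ betaSet m) (hxy : x ≠ y) :
    ((¬ ∃ w : List (Fin 3), w.length = m ∧ x ∈ Fword w '' beta0 ∧ y ∈ Fword w '' beta0) →
      cond (m + 2) (betaSet m) x y = 0) ∧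
    (∀ (w : List (Fin 3)) (xt yt : ℝ × ℝ), w.length = m →
      xt ∈ beta0 → yt ∈ beta0 → xt ≠ yt → x = Fword w xt → y = Fword w yt →
      cond (m + 2) (betaSet m) x y = (5 / 3 : ℝ) ^ m * cond 2 beta0 xt yt) :=
  stmt7_general m x y

end SGPaper
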